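/- Let q ≥ 1 and let θ belong to the closure of the invertible region D_θ. Then θ lies on the frontier of D_θ if and only if at least one coordinate of ζ = B⁻(θ) satisfies |ζ_i| = 1; equivalently, θ ∈ D_θ if and only if |ζ_i| < 1 for all i ∈ {1,…,q}. -/

import Mathlib

/-- Forward recursion for the Barndorff-Nielsen–Schou / Monahan transformation:
`fwdRow ζ k i = θ_{i,k}` (1-based), with `θ_{k,k} = ζ_k` and
`θ_{i,k} = θ_{i,k-1} - ζ_k * θ_{k-i,k-1}` for `1 ≤ i ≤ k-1`. -/
noncomputable def fwdRow (ζ : ℕ → ℝ) : ℕ → ℕ → ℝ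
  | 0 => fun _ => 0
  | (k+1) => fun i =>
      if i = k + 1 then ζ (k + 1)
      else fwdRow ζ k i - ζ (k + 1) * fwdRow ζ k (k + 1 - i)

open Classical in
/-- Reverse recursion: `(invAux q θ d).1` is row `q - d` (i.e. `θ_{·, q-d}`), and
`(invAux q θ d).2` is the proposition that `|θ_{j,j}| < 1` for all `j` with `q - d ≤ j ≤ q`.
Row `q-(d+1)` is given by `θ_{i,k-1} = (θ_{i,k} + θ_{k,k} θ_{k-i,k})/(1-θ_{k,k}^2)` with
`k = q - d` when the diagonal condition holds at all levels `≥ k`, and is `0` otherwise. -/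
noncomputable def invAux (q : ℕ) (θ : ℕ → ℝ) : ℕ → (ℕ → ℝ) × Prop
  | 0 => (θ, |θ q| < 1)
  | (d+1) =>
      let p := invAux q θ d
      let row : ℕ → ℝ := fun i =>
        if p.2 then (p.1 i + p.1 (q - d) * p.1 (q - d - i)) / (1 - (p.1 (q - d)) ^ 2)
        else 0
      (row, p.2 ∧ |row (q - d - 1)| < 1)

/-- Interpret a vector in `ℝ^q` as a 1-based sequence `ℕ → ℝ` (value `0` out of range). -/
def toSeq {q : ℕ} (v : Fin q → ℝ) : ℕ → ℝ :=
  fun n => if h : n - 1 < q then v ⟨n - 1, h⟩ else 0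

/-- The map `B : ℝ^q → ℝ^q`, `B(ζ)_i = θ_{i,q}`. -/
noncomputable def Bmap {q : ℕ} (ζ : Fin q → ℝ) : Fin q → ℝ :=
  fun i => fwdRow (toSeq ζ) q (i.1 + 1)

/-- The map `B⁻ : ℝ^q → ℝ^q`, `B⁻(θ)_i = θ_{i,i}` computed by the reverse recursion. -/
noncomputable def Binv {q : ℕ} (θ : Fin q → ℝ) : Fin q → ℝ :=
  fun i => (invAux q (toSeq θ) (q - (i.1 + 1))).1 (i.1 + 1)

/-- The invertible region `D_θ ⊆ ℝ^q`: all complex roots of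
`θ(z) = 1 - θ_1 z - ⋯ - θ_q z^q` satisfy `|z| > 1`. -/
def invRegion (q : ℕ) : Set (Fin q → ℝ) :=
  {θ | ∀ z : ℂ, 1 - ∑ i : Fin q, (θ i : ℂ) * z ^ (i.1 + 1) = 0 → 1 < ‖z‖}

/-- The open unit cube `D_ζ = (-1,1)^q ⊆ ℝ^q`. -/
def openCube (q : ℕ) : Set (Fin q → ℝ) :=
  {ζ | ∀ i, ζ i ∈ Set.Ioo (-1 : ℝ) 1}

/-!
Write `θ(z) = 1 - θ_1 z - ⋯ - θ_k z^k` and `θ*(z) = z^k θ(1/z)`, and let `θ'` be the row below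
`θ` in the reverse recursion, with `ζ = θ_k`. Then `(1 - ζ²) θ'(z) = θ(z) + ζ θ*(z)` and
`θ(z) = θ'(z) - ζ z θ'*(z)`. Since `|θ*| = |θ|` on the unit circle, the maximum modulus principle
gives `|θ*| ≤ |θ|` on the closed disk as soon as `θ` has no zero there; hence `θ` is invertible
iff `|ζ| < 1` and `θ'` is invertible (that `|ζ| = |θ*(0)| < 1`, and not only `≤ 1`, follows by
first rescaling to a slightly larger disk). So `D_θ` is the set where every coefficient computed
by `B⁻` lies in `(-1, 1)`. If `θ ∈ closure D_θ \ D_θ`, then at the first coefficient with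
`|ζ_k| ≥ 1` all earlier ones are `< 1`, so the recursion is continuous up to that step and `ζ_k`
is a limit of values in `(-1, 1)`; thus `|ζ_k| = 1`.
-/

open Finset ComplexConjugate

/-- `θ(z) = 1 - θ_1 z - ⋯ - θ_k z^k`, with the coefficients read 1-based from `c`. -/
noncomputable def maPoly (k : ℕ) (c : ℕ → ℝ) (z : ℂ) : ℂ :=
  1 - ∑ i ∈ range k, (c (i + 1) : ℂ) * z ^ (i + 1)

noncomputable def maRev (k : ℕ) (c : ℕ → ℝ) (z : ℂ) : ℂ :=
  z ^ k - ∑ i ∈ range k, (c (i + 1) : ℂ) * z ^ (k - 1 - i)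

def IsStable (k : ℕ) (c : ℕ → ℝ) : Prop :=
  ∀ z : ℂ, ‖z‖ ≤ 1 → maPoly k c z ≠ 0

section MaPoly

variable {k : ℕ} {c : ℕ → ℝ}

lemma differentiable_maPoly (k : ℕ) (c : ℕ → ℝ) : Differentiable ℂ (maPoly k c) := by
  unfold maPoly; fun_prop

lemma differentiable_maRev (k : ℕ) (c : ℕ → ℝ) : Differentiable ℂ (maRev k c) := by
  unfold maRev; fun_prop

lemma maPoly_zero_right (k : ℕ) (c : ℕ → ℝ) : maPoly k c 0 = 1 := by
  simp [maPoly]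

lemma maRev_succ_zero_right (m : ℕ) (c : ℕ → ℝ) : maRev (m + 1) c 0 = -c (m + 1) := by
  have hlow : ∑ i ∈ range m, (c (i + 1) : ℂ) * 0 ^ (m - i) = 0 :=
    sum_eq_zero fun i hi => by rw [zero_pow (by grind), mul_zero]
  simp [maRev, sum_range_succ, hlow]

lemma maRev_eq_pow_mul_maPoly_inv {z : ℂ} (hz : z ≠ 0) :
    maRev k c z = z ^ k * maPoly k c z⁻¹ := by
  rw [maRev, maPoly, mul_sub, mul_one, mul_sum]
  congr 1
  refine sum_congr rfl fun i hi => ?_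
  have hk : z ^ k = z ^ (k - 1 - i) * z ^ (i + 1) := by
    rw [← pow_add]; congr 1; grind
  rw [hk, inv_pow]
  field_simp

lemma maPoly_conj (z : ℂ) : maPoly k c (conj z) = conj (maPoly k c z) := by
  simp [maPoly]

lemma norm_maRev_eq_norm_maPoly {z : ℂ} (hz : ‖z‖ = 1) : ‖maRev k c z‖ = ‖maPoly k c z‖ := by
  have hz0 : z ≠ 0 := norm_ne_zero_iff.mp (by rw [hz]; exact one_ne_zero)
  rw [maRev_eq_pow_mul_maPoly_inv hz0, Complex.inv_eq_conj hz, maPoly_conj,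
    norm_mul, norm_pow, hz, one_pow, one_mul, Complex.norm_conj]

end MaPoly

lemma norm_le_of_norm_eq_on_sphere {P Q : ℂ → ℂ} (hP : Differentiable ℂ P)
    (hQ : Differentiable ℂ Q) (hP0 : ∀ z : ℂ, ‖z‖ ≤ 1 → P z ≠ 0)
    (hPQ : ∀ z : ℂ, ‖z‖ = 1 → ‖Q z‖ = ‖P z‖) {z : ℂ} (hz : ‖z‖ ≤ 1) : ‖Q z‖ ≤ ‖P z‖ := by
  have hcl : closure (Metric.ball (0 : ℂ) 1) = Metric.closedBall 0 1 :=
    closure_ball 0 one_ne_zero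
  have hd : DiffContOnCl ℂ (fun w => Q w / P w) (Metric.ball 0 1) := by
    refine DifferentiableOn.diffContOnCl ?_
    rw [hcl]
    exact hQ.differentiableOn.div hP.differentiableOn
      fun w hw => hP0 w (mem_closedBall_zero_iff.mp hw)
  have hquot : ‖Q z / P z‖ ≤ 1 := by
    refine Complex.norm_le_of_forall_mem_frontier_norm_le Metric.isBounded_ball hd
      (fun w hw => ?_) (by rwa [hcl, mem_closedBall_zero_iff])
    rw [frontier_ball 0 one_ne_zero, mem_sphere_zero_iff_norm] at hw
    rw [norm_div, hPQ w hw]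
    exact div_self_le_one _
  rwa [norm_div, div_le_one (norm_pos_iff.mpr (hP0 z hz))] at hquot

section Stable

variable {k : ℕ} {c : ℕ → ℝ}

lemma IsStable.norm_maRev_le (h : IsStable k c) {z : ℂ} (hz : ‖z‖ ≤ 1) :
    ‖maRev k c z‖ ≤ ‖maPoly k c z‖ :=
  norm_le_of_norm_eq_on_sphere (differentiable_maPoly k c) (differentiable_maRev k c) h
    (fun _ => norm_maRev_eq_norm_maPoly) hz

lemma IsStable.abs_le_one {m : ℕ} (h : IsStable (m + 1) c) : |c (m + 1)| ≤ 1 := by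
  simpa [maRev_succ_zero_right, maPoly_zero_right] using h.norm_maRev_le (z := 0) (by simp)

lemma maPoly_scale (R : ℝ) (z : ℂ) :
    maPoly k (fun i => c i * R ^ i) z = maPoly k c (R * z) := by
  simp only [maPoly]
  congr 1
  refine sum_congr rfl fun i _ => ?_
  push_cast
  ring

lemma IsStable.exists_one_lt_scale (h : IsStable k c) :
    ∃ R > 1, IsStable k (fun i => c i * R ^ i) := by
  have hopen : IsOpen {z | maPoly k c z ≠ 0} :=
    isOpen_ne_fun (differentiable_maPoly k c).continuous continuous_const
  have hsub : Metric.closedBall (0 : ℂ) 1 ⊆ {z | maPoly k c z ≠ 0} :=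
    fun z hz => h z (mem_closedBall_zero_iff.mp hz)
  obtain ⟨δ, hδ, hδsub⟩ := (isCompact_closedBall 0 1).exists_cthickening_subset_open hopen hsub
  rw [cthickening_closedBall hδ.le zero_le_one] at hδsub
  refine ⟨δ + 1, by linarith, fun z hz => ?_⟩
  rw [maPoly_scale]
  apply hδsub
  rw [mem_closedBall_zero_iff, norm_mul, Complex.norm_real, Real.norm_of_nonneg (by positivity)]
  exact mul_le_of_le_one_right (by positivity) hz

lemma IsStable.abs_lt_one {m : ℕ} (h : IsStable (m + 1) c) : |c (m + 1)| < 1 := by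
  obtain ⟨R, hR, hRc⟩ := h.exists_one_lt_scale
  have hle := hRc.abs_le_one
  rw [abs_mul, abs_of_pos (by positivity : (0 : ℝ) < R ^ (m + 1))] at hle
  have hRpow : 1 < R ^ (m + 1) := one_lt_pow₀ hR (by omega)
  nlinarith [abs_nonneg (c (m + 1))]

end Stable

noncomputable def levinsonDown (k : ℕ) (a : ℕ → ℝ) (i : ℕ) : ℝ :=
  (a i + a k * a (k - i)) / (1 - a k ^ 2)

section Levinson

variable {m : ℕ} {a b : ℕ → ℝ} {ζ : ℝ}

lemma sum_range_reflect_mul_pow (b : ℕ → ℝ) (z : ℂ) :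
    ∑ i ∈ range m, (b (m - i) : ℂ) * z ^ (i + 1)
      = z * ∑ i ∈ range m, (b (i + 1) : ℂ) * z ^ (m - 1 - i) := by
  rw [mul_sum, ← sum_range_reflect]
  refine sum_congr rfl fun i hi => ?_
  rw [mem_range] at hi
  rw [show m - (m - 1 - i) = i + 1 by omega, pow_succ]
  ring

lemma maPoly_succ_of_step (hζ : a (m + 1) = ζ)
    (hab : ∀ i, 1 ≤ i → i ≤ m → a i = b i - ζ * b (m + 1 - i)) (z : ℂ) :
    maPoly (m + 1) a z = maPoly m b z - ζ * (z * maRev m b z) := by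
  have hsum : ∑ i ∈ range m, (a (i + 1) : ℂ) * z ^ (i + 1)
      = ∑ i ∈ range m, (b (i + 1) : ℂ) * z ^ (i + 1)
        - ζ * ∑ i ∈ range m, (b (m - i) : ℂ) * z ^ (i + 1) := by
    rw [mul_sum, ← sum_sub_distrib]
    refine sum_congr rfl fun i hi => ?_
    rw [mem_range] at hi
    rw [hab (i + 1) (by omega) (by omega), show m + 1 - (i + 1) = m - i by omega]
    push_cast
    ring
  rw [maPoly, sum_range_succ, hsum, sum_range_reflect_mul_pow, hζ, maPoly, maRev]
  ring

lemma maRev_succ_of_step (hζ : a (m + 1) = ζ)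
    (hab : ∀ i, 1 ≤ i → i ≤ m → a i = b i - ζ * b (m + 1 - i)) (z : ℂ) :
    maRev (m + 1) a z = z * maRev m b z - ζ * maPoly m b z := by
  suffices h : Set.EqOn (maRev (m + 1) a) (fun z => z * maRev m b z - ζ * maPoly m b z) {0}ᶜ from
    congrFun (Continuous.ext_on (dense_compl_singleton 0) (differentiable_maRev _ _).continuous
      ((continuous_id.mul (differentiable_maRev m b).continuous).sub
        (continuous_const.mul (differentiable_maPoly m b).continuous)) h) z
  intro z (hz : z ≠ 0)
  have hb := maRev_eq_pow_mul_maPoly_inv (k := m) (c := b) hz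
  have hb' := maRev_eq_pow_mul_maPoly_inv (k := m) (c := b) (inv_ne_zero hz)
  rw [inv_inv] at hb'
  dsimp only
  rw [maRev_eq_pow_mul_maPoly_inv hz, maPoly_succ_of_step hζ hab, hb', hb, inv_pow]
  field_simp
  ring

lemma one_sub_sq_ne_zero (hζ : |ζ| < 1) : 1 - ζ ^ 2 ≠ 0 :=
  sub_ne_zero.mpr (ne_of_gt ((sq_lt_one_iff_abs_lt_one ζ).mpr hζ))

lemma eq_levinsonDown_sub (hζ : |a (m + 1)| < 1) (i : ℕ) (hi₁ : 1 ≤ i) (hi : i ≤ m) :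
    a i = levinsonDown (m + 1) a i - a (m + 1) * levinsonDown (m + 1) a (m + 1 - i) := by
  have hne := one_sub_sq_ne_zero hζ
  simp only [levinsonDown, show m + 1 - (m + 1 - i) = i by omega]
  field_simp
  ring

lemma sub_ofReal_mul_ne_zero {P Q : ℂ} (hP : P ≠ 0) (hQ : ‖Q‖ ≤ ‖P‖) (hζ : |ζ| < 1) :
    P - ζ * Q ≠ 0 := by
  rw [sub_ne_zero]
  intro h
  have hle : ‖P‖ ≤ |ζ| * ‖P‖ :=
    calc ‖P‖ = |ζ| * ‖Q‖ := by rw [h, norm_mul, Complex.norm_real, Real.norm_eq_abs]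
      _ ≤ |ζ| * ‖P‖ := by gcongr
  nlinarith [norm_pos_iff.mpr hP]

theorem isStable_succ_iff :
    IsStable (m + 1) a ↔ |a (m + 1)| < 1 ∧ IsStable m (levinsonDown (m + 1) a) := by
  constructor
  · intro ha
    have hζ := ha.abs_lt_one
    have hstep := eq_levinsonDown_sub hζ
    refine ⟨hζ, fun z hz hb => ?_⟩
    have hcomb : maPoly (m + 1) a z - (-a (m + 1) : ℝ) * maRev (m + 1) a z
        = (1 - a (m + 1) ^ 2 : ℝ) * maPoly m (levinsonDown (m + 1) a) z := by
      rw [maPoly_succ_of_step rfl hstep, maRev_succ_of_step rfl hstep]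
      push_cast
      ring
    refine sub_ofReal_mul_ne_zero (ha z hz) (ha.norm_maRev_le hz) (by rwa [abs_neg]) ?_
    rw [hcomb, hb, mul_zero]
  · rintro ⟨hζ, hb⟩ z hz
    rw [maPoly_succ_of_step rfl (eq_levinsonDown_sub hζ)]
    refine sub_ofReal_mul_ne_zero (hb z hz) ?_ hζ
    rw [norm_mul]
    exact (mul_le_of_le_one_left (norm_nonneg _) hz).trans (hb.norm_maRev_le hz)

end Levinson

/-- Row `q - d` of the reverse recursion, without the guard `|θ_{j,j}| < 1` of `invAux`. -/
noncomputable def levinsonRows (q : ℕ) (θ : ℕ → ℝ) : ℕ → ℕ → ℝ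
  | 0 => θ
  | d + 1 => levinsonDown (q - d) (levinsonRows q θ d)

/-- `reflCoeff q θ d = θ_{q-d,q-d}`: the reflection coefficient produced at depth `d`. -/
noncomputable def reflCoeff (q : ℕ) (θ : ℕ → ℝ) (d : ℕ) : ℝ :=
  levinsonRows q θ d (q - d)

lemma levinsonRows_succ_succ (q : ℕ) (θ : ℕ → ℝ) (d : ℕ) :
    levinsonRows (q + 1) θ (d + 1) = levinsonRows q (levinsonDown (q + 1) θ) d := by
  induction d with
  | zero => rfl
  | succ d ih =>
    rw [levinsonRows, ih, show q + 1 - (d + 1) = q - d by omega]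
    rfl

lemma reflCoeff_succ_succ (q : ℕ) (θ : ℕ → ℝ) (d : ℕ) :
    reflCoeff (q + 1) θ (d + 1) = reflCoeff q (levinsonDown (q + 1) θ) d := by
  rw [reflCoeff, levinsonRows_succ_succ, show q + 1 - (d + 1) = q - d by omega, reflCoeff]

theorem isStable_iff_forall_abs_reflCoeff_lt (q : ℕ) (θ : ℕ → ℝ) :
    IsStable q θ ↔ ∀ d < q, |reflCoeff q θ d| < 1 := by
  induction q generalizing θ with
  | zero => simp [IsStable, maPoly]
  | succ q ih =>
    rw [isStable_succ_iff, ih, Nat.forall_lt_succ_left]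
    simp only [reflCoeff_succ_succ]
    rfl

lemma invAux_eq_levinsonRows (q : ℕ) (θ : ℕ → ℝ) :
    ∀ d, (∀ e < d, |reflCoeff q θ e| < 1) →
      (invAux q θ d).1 = levinsonRows q θ d ∧ ((invAux q θ d).2 ↔ |reflCoeff q θ d| < 1)
  | 0, _ => ⟨rfl, Iff.rfl⟩
  | d + 1, h => by
    obtain ⟨hrow, hdiag⟩ := invAux_eq_levinsonRows q θ d fun e he => h e (by omega)
    have hd : (invAux q θ d).2 := hdiag.mpr (h d (by omega))
    have hrow' : (invAux q θ (d + 1)).1 = levinsonRows q θ (d + 1) := by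
      funext i
      simp only [invAux, if_pos hd, hrow]
      rfl
    refine ⟨hrow', ?_⟩
    show (invAux q θ d).2 ∧ |(invAux q θ (d + 1)).1 (q - d - 1)| < 1 ↔ _
    rw [hrow', Nat.sub_sub, and_iff_right hd]
    rfl

section Binv

variable {q : ℕ}

lemma Binv_eq_reflCoeff (θ : Fin q → ℝ) {i : Fin q} {d : ℕ} (hid : i.1 + 1 + d = q)
    (h : ∀ e < d, |reflCoeff q (toSeq θ) e| < 1) : Binv θ i = reflCoeff q (toSeq θ) d := by
  have hd : q - (i.1 + 1) = d := by omega
  simp only [Binv, hd, (invAux_eq_levinsonRows q _ d h).1, reflCoeff]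
  congr 1
  omega

lemma forall_abs_Binv_lt_iff (θ : Fin q → ℝ) :
    (∀ i, |Binv θ i| < 1) ↔ ∀ d < q, |reflCoeff q (toSeq θ) d| < 1 := by
  constructor
  · intro h d
    induction d using Nat.strong_induction_on with
    | _ d ih =>
      intro hd
      rw [← Binv_eq_reflCoeff θ (i := ⟨q - 1 - d, by omega⟩) (by simp only; omega)
        fun e he => ih e he (by omega)]
      exact h _
  · intro h i
    rw [Binv_eq_reflCoeff θ (d := q - (i.1 + 1)) (by omega) fun e _ => h e (by omega)]
    exact h _ (by omega)

lemma toSeq_succ (θ : Fin q → ℝ) (i : Fin q) : toSeq θ (i.1 + 1) = θ i := by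
  simp [toSeq]

lemma mem_invRegion_iff_isStable (θ : Fin q → ℝ) :
    θ ∈ invRegion q ↔ IsStable q (toSeq θ) := by
  have hpoly : ∀ z : ℂ, 1 - ∑ i : Fin q, (θ i : ℂ) * z ^ (i.1 + 1) = maPoly q (toSeq θ) z := by
    intro z
    rw [maPoly, ← Fin.sum_univ_eq_sum_range (fun i => (toSeq θ (i + 1) : ℂ) * z ^ (i + 1))]
    simp only [toSeq_succ]
  simp only [invRegion, Set.mem_ofPred_eq, IsStable, hpoly]
  exact forall_congr' fun z => by rw [← not_lt, not_imp_not]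

lemma mem_invRegion_iff_forall_abs_reflCoeff_lt (θ : Fin q → ℝ) :
    θ ∈ invRegion q ↔ ∀ d < q, |reflCoeff q (toSeq θ) d| < 1 :=
  (mem_invRegion_iff_isStable θ).trans (isStable_iff_forall_abs_reflCoeff_lt q _)

lemma mem_invRegion_iff_forall_abs_Binv_lt (θ : Fin q → ℝ) :
    θ ∈ invRegion q ↔ ∀ i, |Binv θ i| < 1 :=
  (mem_invRegion_iff_forall_abs_reflCoeff_lt θ).trans (forall_abs_Binv_lt_iff θ).symm

lemma continuous_toSeq_apply (n : ℕ) : Continuous fun θ : Fin q → ℝ => toSeq θ n := by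
  unfold toSeq
  split_ifs <;> fun_prop

lemma continuousAt_levinsonRows {θ : Fin q → ℝ} :
    ∀ {d : ℕ}, (∀ e < d, |reflCoeff q (toSeq θ) e| < 1) →
      ∀ i, ContinuousAt (fun θ' : Fin q → ℝ => levinsonRows q (toSeq θ') d i) θ
  | 0, _, i => (continuous_toSeq_apply i).continuousAt
  | d + 1, h, i => by
    have ih := continuousAt_levinsonRows (d := d) fun e he => h e (by omega)
    exact ((ih i).add ((ih _).mul (ih _))).div (continuousAt_const.sub ((ih _).pow 2))
      (one_sub_sq_ne_zero (h d (by omega)))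

lemma continuousAt_reflCoeff {θ : Fin q → ℝ} {d : ℕ}
    (h : ∀ e < d, |reflCoeff q (toSeq θ) e| < 1) :
    ContinuousAt (fun θ' : Fin q → ℝ => reflCoeff q (toSeq θ') d) θ :=
  continuousAt_levinsonRows h _

lemma isOpen_invRegion (q : ℕ) : IsOpen (invRegion q) := by
  refine isOpen_iff_mem_nhds.mpr fun θ hθ => ?_
  rw [mem_invRegion_iff_forall_abs_reflCoeff_lt] at hθ
  have hev : ∀ d ∈ {d | d < q}, ∀ᶠ θ' in nhds θ, |reflCoeff q (toSeq θ') d| < 1 :=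
    fun d hd => (continuousAt_reflCoeff fun e he => hθ e (he.trans hd)).abs.eventually_lt
      continuousAt_const (hθ d hd)
  filter_upwards [(Filter.eventually_all_finite (Set.finite_lt_nat q)).mpr hev] with θ' hθ'
  exact (mem_invRegion_iff_forall_abs_reflCoeff_lt θ').mpr hθ'

lemma abs_reflCoeff_le_one {θ : Fin q → ℝ} (hθ : θ ∈ closure (invRegion q)) {d : ℕ}
    (hd : d < q) (h : ∀ e < d, |reflCoeff q (toSeq θ) e| < 1) :
    |reflCoeff q (toSeq θ) d| ≤ 1 := by
  have hmaps : Set.MapsTo (fun θ' => |reflCoeff q (toSeq θ') d|) (invRegion q) (Set.Iic 1) :=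
    fun θ' hθ' => ((mem_invRegion_iff_forall_abs_reflCoeff_lt θ').mp hθ' d hd).le
  simpa [closure_Iic] using (continuousAt_reflCoeff h).abs.continuousWithinAt.mem_closure hθ hmaps

lemma exists_abs_Binv_eq_one {θ : Fin q → ℝ} (hθ : θ ∈ closure (invRegion q))
    (hθ' : θ ∉ invRegion q) : ∃ i, |Binv θ i| = 1 := by
  classical
  rw [mem_invRegion_iff_forall_abs_reflCoeff_lt] at hθ'
  push Not at hθ'
  obtain ⟨hdq, hd⟩ := Nat.find_spec hθ'
  have hlt : ∀ e < Nat.find hθ', |reflCoeff q (toSeq θ) e| < 1 := fun e he =>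
    not_le.mp fun h => Nat.find_min hθ' he ⟨he.trans hdq, h⟩
  refine ⟨⟨q - 1 - Nat.find hθ', by omega⟩, ?_⟩
  rw [Binv_eq_reflCoeff θ (by simp only; omega) hlt]
  exact le_antisymm (abs_reflCoeff_le_one hθ hdq hlt) hd

end Binv

theorem boundary_test_general {q : ℕ} (θ : Fin q → ℝ)
    (hθ : θ ∈ closure (invRegion q)) :
    (θ ∈ frontier (invRegion q) ↔ ∃ i, |Binv θ i| = 1) ∧
    (θ ∈ invRegion q ↔ ∀ i, |Binv θ i| < 1) := by
  refine ⟨?_, mem_invRegion_iff_forall_abs_Binv_lt θ⟩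
  rw [(isOpen_invRegion q).frontier_eq, Set.mem_sdiff, and_iff_right hθ]
  exact ⟨exists_abs_Binv_eq_one hθ, fun ⟨i, hi⟩ hmem =>
    ((mem_invRegion_iff_forall_abs_Binv_lt θ).mp hmem i).ne hi⟩

/-- For `q ≥ 1` and `θ` in the closure of the invertible region: `θ` lies on the frontier
iff some coordinate of `ζ = B⁻(θ)` has `|ζ_i| = 1`; equivalently, `θ ∈ D_θ` iff
`|ζ_i| < 1` for all `i`. -/
theorem boundary_test {q : ℕ} (hq : 1 ≤ q) (θ : Fin q → ℝ)
    (hθ : θ ∈ closure (invRegion q)) :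
    (θ ∈ frontier (invRegion q) ↔ ∃ i, |Binv θ i| = 1) ∧
    (θ ∈ invRegion q ↔ ∀ i, |Binv θ i| < 1) :=
  boundary_test_general θ hθ
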